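/- Let w, l₁, l₂, D, b₁, b₂, b₃ be real numbers with w ≠ 0 and l₁ + l₂ ≠ 0. Then the system of equations w(f₁ − f₂ − f₃ + f₄) = b₁, −l₂(f₁ + f₂) + l₁(f₃ + f₄) = b₂, f₁ + f₂ + f₃ + f₄ = b₃, and f₂ − f₁ = D(f₂ + f₃ − f₁ − f₄) has the unique solution f₁ = (l₁ b₃ − b₂)/(2(l₁ + l₂)) + D b₁/(2w), f₂ = (l₁ b₃ − b₂)/(2(l₁ + l₂)) − D b₁/(2w), f₃ = (l₂ b₃ + b₂)/(2(l₁ + l₂)) − (1−D) b₁/(2w), f₄ = (l₂ b₃ + b₂)/(2(l₁ + l₂)) + (1−D) b₁/(2w). -/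

import Mathlib

theorem wheelLoads_unique_solution
    (w l₁ l₂ D b₁ b₂ b₃ : ℝ) (hw : w ≠ 0) (hl : l₁ + l₂ ≠ 0)
    (f₁ f₂ f₃ f₄ : ℝ) :
    (w * (f₁ - f₂ - f₃ + f₄) = b₁ ∧
     -l₂ * (f₁ + f₂) + l₁ * (f₃ + f₄) = b₂ ∧
     f₁ + f₂ + f₃ + f₄ = b₃ ∧
     f₂ - f₁ = D * (f₂ + f₃ - f₁ - f₄)) ↔
    (f₁ = (l₁ * b₃ - b₂) / (2 * (l₁ + l₂)) + D * b₁ / (2 * w) ∧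
     f₂ = (l₁ * b₃ - b₂) / (2 * (l₁ + l₂)) - D * b₁ / (2 * w) ∧
     f₃ = (l₂ * b₃ + b₂) / (2 * (l₁ + l₂)) - (1 - D) * b₁ / (2 * w) ∧
     f₄ = (l₂ * b₃ + b₂) / (2 * (l₁ + l₂)) + (1 - D) * b₁ / (2 * w)) := by
  constructor
  · rintro ⟨h1, h2, h3, h4⟩
    have hA : (l₁ + l₂) * (f₁ + f₂) = l₁ * b₃ - b₂ := by linear_combination l₁ * h3 - h2
    have hB : (l₁ + l₂) * (f₃ + f₄) = l₂ * b₃ + b₂ := by linear_combination l₂ * h3 + h2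
    have hC : w * (f₂ - f₁) = -(D * b₁) := by linear_combination w * h4 - D * h1
    have hD : w * (f₄ - f₃) = (1 - D) * b₁ := by linear_combination h1 + hC
    refine ⟨?_, ?_, ?_, ?_⟩
    · field_simp
      linear_combination w * hA - (l₁ + l₂) * hC
    · field_simp
      linear_combination w * hA + (l₁ + l₂) * hC
    · field_simp
      linear_combination w * hB - (l₁ + l₂) * hD
    · field_simp
      linear_combination w * hB + (l₁ + l₂) * hD
  · rintro ⟨e1, e2, e3, e4⟩
    subst e1 e2 e3 e4
    refine ⟨?_, ?_, ?_, ?_⟩ <;> field_simp <;> ring
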